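/- arXiv:2311.01262 — 8 statements merged into one kernel-verified Lean document; each statement's English description precedes it below -/
import Mathlib

section
/- For σ in R^{1,2} and z = (x,y) on the unit circle, dΠ_{(1,z)}((1,z) ⊠ σ) = ⟨(1,z), σ⟩_{1,2} · (-y, x). In other words, the Killing vector field Λ(σ) expressed in the Klein model extends to the boundary circle with support function z ↦ ⟨(1,z), σ⟩_{1,2}. -/
/-- The Minkowski bilinear form of signature `(-,+,+)` on `ℝ × ℝ × ℝ`. -/
def mink (x y : ℝ × ℝ × ℝ) : ℝ := -(x.1 * y.1) + x.2.1 * y.2.1 + x.2.2 * y.2.2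

/-- The Minkowski cross product `x ⊠ y`, the unique vector with
`⟨x ⊠ y, w⟩_{1,2} = det(x,y,w)` for all `w`. -/
def mcross (x y : ℝ × ℝ × ℝ) : ℝ × ℝ × ℝ :=
  (-(x.2.1 * y.2.2 - x.2.2 * y.2.1), x.2.2 * y.1 - x.1 * y.2.2, x.1 * y.2.1 - x.2.1 * y.1)

/-- The radial projection `Π(x0,x1,x2) = (x1/x0, x2/x0)`. -/
noncomputable def radialProj (p : ℝ × ℝ × ℝ) : ℝ × ℝ := (p.2.1 / p.1, p.2.2 / p.1)

/-- For `σ ∈ ℝ^{1,2}` and `z = (x,y)` on the unit circle,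
`dΠ_{(1,z)}((1,z) ⊠ σ) = ⟨(1,z), σ⟩_{1,2} · (-y, x)`: the Killing field `Λ(σ)` in the
Klein model extends to the boundary circle with support function `z ↦ ⟨(1,z), σ⟩_{1,2}`. -/
theorem killing_support_function (σ : ℝ × ℝ × ℝ) (x y : ℝ) (hz : x ^ 2 + y ^ 2 = 1) :
    fderiv ℝ radialProj (1, x, y) (mcross (1, x, y) σ)
      = mink (1, x, y) σ • ((-y, x) : ℝ × ℝ) := by
  have h0 : HasFDerivAt (fun p : ℝ × ℝ × ℝ => p.1)
      (ContinuousLinearMap.fst ℝ ℝ (ℝ × ℝ)) (1, x, y) := hasFDerivAt_fst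
  have h1 : HasFDerivAt (fun p : ℝ × ℝ × ℝ => p.2.1)
      ((ContinuousLinearMap.fst ℝ ℝ ℝ).comp (ContinuousLinearMap.snd ℝ ℝ (ℝ × ℝ)))
      (1, x, y) := hasFDerivAt_fst.comp _ hasFDerivAt_snd
  have h2 : HasFDerivAt (fun p : ℝ × ℝ × ℝ => p.2.2)
      ((ContinuousLinearMap.snd ℝ ℝ ℝ).comp (ContinuousLinearMap.snd ℝ ℝ (ℝ × ℝ)))
      (1, x, y) := hasFDerivAt_snd.comp _ hasFDerivAt_snd
  have hinv : HasFDerivAt (fun p : ℝ × ℝ × ℝ => (p.1)⁻¹)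
      ((ContinuousLinearMap.smulRight (1 : ℝ →L[ℝ] ℝ) (-((1:ℝ) ^ 2)⁻¹)).comp
        (ContinuousLinearMap.fst ℝ ℝ (ℝ × ℝ))) (1, x, y) :=
    HasFDerivAt.comp (𝕜 := ℝ) (x := ((1,x,y) : ℝ × ℝ × ℝ)) (hasFDerivAt_inv (x := (1:ℝ)) one_ne_zero) h0
  have hd1 := h1.mul hinv
  have hd2 := h2.mul hinv
  have hD : HasFDerivAt (fun p : ℝ × ℝ × ℝ => (p.2.1 * (p.1)⁻¹, p.2.2 * (p.1)⁻¹)) _ (1, x, y) :=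
    HasFDerivAt.prodMk hd1 hd2
  have : radialProj = fun p : ℝ × ℝ × ℝ => (p.2.1 * (p.1)⁻¹, p.2.2 * (p.1)⁻¹) := by
    funext p; simp [radialProj, div_eq_mul_inv]
  rw [this, hD.fderiv]
  simp [mcross, mink]
  constructor
  · linear_combination σ.2.2 * hz
  · linear_combination (-σ.2.1) * hz
end

section
/- Let φ : S^1 → R be a function and let v1, v2 be vectors in R^{1,2} such that for all η in the closed unit disk, ⟨(1,η), v1⟩_{1,2} ≤ φ^-(η) and ⟨(1,η), v2⟩_{1,2} ≤ φ^-(η), where φ^- is the convex lower envelope of φ, and suppose each inequality attains equality at some point of the open disk. Then there exists η in the open unit disk with ⟨(1,η), v1⟩_{1,2} = ⟨(1,η), v2⟩_{1,2}; in particular, if v1 ≠ v2, then v1 - v2 is not timelike or null in a way preventing intersection, i.e., the two affine support planes intersect over the open disk. -/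
/-- The convex lower envelope `φ⁻` of a function `φ` on the unit circle:
`φ⁻(η) = sup { a(η) : a affine on ℝ², a ≤ φ on S¹ }`. -/
noncomputable def lowerEnv (φ : ℝ × ℝ → ℝ) (η : ℝ × ℝ) : ℝ :=
  sSup {y : ℝ | ∃ a : (ℝ × ℝ) →ᵃ[ℝ] ℝ,
    (∀ z : ℝ × ℝ, z.1 ^ 2 + z.2 ^ 2 = 1 → a z ≤ φ z) ∧ y = a η}

/-!
Write `f₁, f₂` for the two affine functions `η ↦ ⟨(1, η), vᵢ⟩`. Both lie below `φ⁻` and each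
touches it at a point of the open disk, so `f₂ ≤ f₁` where `f₁` touches and `f₁ ≤ f₂` where `f₂`
touches. The open disk is convex, hence connected, and the intermediate value theorem gives a
point in between where `f₁ = f₂`.
-/

theorem convexOn_sq_add_sq : ConvexOn ℝ Set.univ (fun η : ℝ × ℝ => η.1 ^ 2 + η.2 ^ 2) := by
  have hsq : ConvexOn ℝ Set.univ (fun x : ℝ => x ^ 2) := even_two.convexOn_pow
  exact (hsq.comp_linearMap (LinearMap.fst ℝ ℝ ℝ)).add (hsq.comp_linearMap (LinearMap.snd ℝ ℝ ℝ))

theorem convex_sq_add_sq_lt_one : Convex ℝ {η : ℝ × ℝ | η.1 ^ 2 + η.2 ^ 2 < 1} := by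
  simpa using convexOn_sq_add_sq.convex_lt 1

theorem continuous_mink_one (v : ℝ × ℝ × ℝ) :
    Continuous fun η : ℝ × ℝ => mink (1, η.1, η.2) v := by
  unfold mink
  fun_prop

theorem IsPreconnected.exists_eq_of_touch_common_majorant {X α : Type*} [TopologicalSpace X]
    [LinearOrder α] [TopologicalSpace α] [OrderClosedTopology α] {s : Set X}
    (hs : IsPreconnected s) {f g h : X → α} (hf : ContinuousOn f s) (hg : ContinuousOn g s)
    (hfh : ∀ x ∈ s, f x ≤ h x) (hgh : ∀ x ∈ s, g x ≤ h x)
    (hf_touch : ∃ x ∈ s, f x = h x) (hg_touch : ∃ x ∈ s, g x = h x) :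
    ∃ x ∈ s, f x = g x := by
  obtain ⟨a, ha, hfa⟩ := hf_touch
  obtain ⟨b, hb, hgb⟩ := hg_touch
  exact hs.intermediate_value₂ hb ha hf hg (hgb ▸ hfh b hb) (hfa ▸ hgh a ha)

/-- Two support planes of the epigraph of `φ⁻` touching the graph over the open disk must
intersect over the open disk. -/
theorem support_planes_intersect (φ : ℝ × ℝ → ℝ) (v₁ v₂ : ℝ × ℝ × ℝ)
    (h₁ : ∀ η : ℝ × ℝ, η.1 ^ 2 + η.2 ^ 2 ≤ 1 → mink (1, η.1, η.2) v₁ ≤ lowerEnv φ η)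
    (h₂ : ∀ η : ℝ × ℝ, η.1 ^ 2 + η.2 ^ 2 ≤ 1 → mink (1, η.1, η.2) v₂ ≤ lowerEnv φ η)
    (he₁ : ∃ η : ℝ × ℝ, η.1 ^ 2 + η.2 ^ 2 < 1 ∧ mink (1, η.1, η.2) v₁ = lowerEnv φ η)
    (he₂ : ∃ η : ℝ × ℝ, η.1 ^ 2 + η.2 ^ 2 < 1 ∧ mink (1, η.1, η.2) v₂ = lowerEnv φ η) :
    ∃ η : ℝ × ℝ, η.1 ^ 2 + η.2 ^ 2 < 1 ∧
      mink (1, η.1, η.2) v₁ = mink (1, η.1, η.2) v₂ :=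
  convex_sq_add_sq_lt_one.isPreconnected.exists_eq_of_touch_common_majorant
    (f := fun η => mink (1, η.1, η.2) v₁) (g := fun η => mink (1, η.1, η.2) v₂) (h := lowerEnv φ)
    (continuous_mink_one v₁).continuousOn (continuous_mink_one v₂).continuousOn
    (fun η hη => h₁ η hη.le) (fun η hη => h₂ η hη.le) he₁ he₂
end

section
/- Let v1 ≠ v2 in R^{1,2} and let P_{v1}, P_{v2} be the affine planes in D^2 × R given by P_v = {(η,t) : ⟨(1,η), v⟩_{1,2} = t}. Then P_{v1} and P_{v2} intersect in a nonempty set over the open disk D^2 if and only if v1 - v2 is spacelike, i.e., ⟨v1 - v2, v1 - v2⟩_{1,2} > 0. -/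
/-- For `v₁ ≠ v₂` in `ℝ^{1,2}`, the planes `P_{vᵢ} = {(η,t) : ⟨(1,η), vᵢ⟩ = t}` of
`D² × ℝ` intersect over the open unit disk if and only if `v₁ - v₂` is spacelike. -/
theorem planes_intersect_iff_spacelike (v₁ v₂ : ℝ × ℝ × ℝ) (hne : v₁ ≠ v₂) :
    (∃ η : ℝ × ℝ, η.1 ^ 2 + η.2 ^ 2 < 1 ∧
        mink (1, η.1, η.2) v₁ = mink (1, η.1, η.2) v₂) ↔
      0 < mink (v₁ - v₂) (v₁ - v₂) := by
  obtain ⟨p, q, r⟩ := v₁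
  obtain ⟨p', q', r'⟩ := v₂
  set a := p - p' with ha
  set b := q - q' with hb
  set c := r - r' with hc
  have hgoal : mink ((p, q, r) - (p', q', r')) ((p, q, r) - (p', q', r'))
      = -(a*a) + b*b + c*c := by
    simp [mink, Prod.sub_def, ha, hb, hc]
  rw [hgoal]
  constructor
  · rintro ⟨η, hη, heq⟩
    have key : b * η.1 + c * η.2 = a := by
      simp only [mink, ha, hb, hc] at heq ⊢
      ring_nf at heq ⊢
      linarith
    by_cases hbc : b ^ 2 + c ^ 2 = 0
    · exfalso
      have hb0 : b = 0 := by nlinarith [sq_nonneg b, sq_nonneg c]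
      have hc0 : c = 0 := by nlinarith [sq_nonneg b, sq_nonneg c]
      have ha0 : a = 0 := by rw [hb0, hc0] at key; linarith
      apply hne
      have hq : q = q' := by have := hb0; simp [hb] at this; linarith
      have hr : r = r' := by have := hc0; simp [hc] at this; linarith
      have hp : p = p' := by have := ha0; simp [ha] at this; linarith
      simp [hp, hq, hr]
    · have hpos : 0 < b ^ 2 + c ^ 2 :=
        lt_of_le_of_ne (by positivity) (Ne.symm hbc)
      have h2 : (b ^ 2 + c ^ 2) * (η.1 ^ 2 + η.2 ^ 2) < b ^ 2 + c ^ 2 := by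
        nlinarith
      have h3 : a ^ 2 + (b * η.2 - c * η.1) ^ 2 = (b ^ 2 + c ^ 2) * (η.1 ^ 2 + η.2 ^ 2) := by
        rw [← key]; ring
      nlinarith [sq_nonneg (b * η.2 - c * η.1), h2, h3]
  · intro h
    set s := b ^ 2 + c ^ 2 with hs
    have hpos : 0 < s := by nlinarith [sq_nonneg a]
    refine ⟨(a * b / s, a * c / s), ?_, ?_⟩
    · have : (a * b / s) ^ 2 + (a * c / s) ^ 2 = a ^ 2 / s := by
        field_simp
        ring
      rw [this]
      rw [div_lt_one hpos]
      nlinarith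
    · simp only [mink]
      field_simp
      ring_nf
      simp only [hs, ha, hb, hc]; ring
end

section
/- Let K be a closed convex subset of D^2 × R (D^2 the open unit disk) which is the epigraph of a convex function, and let L be a spacelike line in D^2 × R contained in the boundary of K. Then the set S(L) of vectors σ in R^{1,2} such that the plane P_σ = {(η,t) : ⟨(1,η),σ⟩_{1,2} = t} is a support plane of K containing L is either a single point or a compact segment contained in a line of spacelike direction. -/
private lemma disk_perturb (a b u v : ℝ) (h : a^2 + b^2 < 1) :
    ∃ ε : ℝ, 0 < ε ∧ ∀ s : ℝ, |s| ≤ ε → (a + s*u)^2 + (b + s*v)^2 < 1 := by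
  set c := a*u + b*v with hc
  set r := 1 - (a^2+b^2) with hr
  have hrpos : 0 < r := by simp only [hr]; linarith
  set K := 2*|c| + (u^2+v^2) + r + 1 with hK
  have hKpos : 0 < K := by positivity
  set ε := r / K with hε
  have hεpos : 0 < ε := by positivity
  refine ⟨ε, hεpos, fun s hs => ?_⟩
  obtain ⟨hs1, hs2⟩ := abs_le.mp hs
  have hc1 : c ≤ |c| := le_abs_self _
  have hc2 : -(|c|) ≤ c := neg_abs_le _
  have hεle : ε ≤ 1 := by
    rw [hε, div_le_one hKpos]
    nlinarith [abs_nonneg c, sq_nonneg u, sq_nonneg v]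
  have hεK : ε * K = r := div_mul_cancel₀ _ (ne_of_gt hKpos)
  have habs : s * c ≤ ε * |c| := by
    calc s * c ≤ |s * c| := le_abs_self _
    _ = |s| * |c| := abs_mul _ _
    _ ≤ ε * |c| := mul_le_mul_of_nonneg_right hs (abs_nonneg _)
  have hsq : s^2 ≤ ε := by
    have h1 : s^2 ≤ ε^2 := by nlinarith [abs_nonneg s, sq_abs s]
    nlinarith
  have hsnw : s^2 * (u^2+v^2) ≤ ε * (u^2+v^2) :=
    mul_le_mul_of_nonneg_right hsq (by positivity)
  nlinarith [mul_pos hεpos hrpos]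

set_option maxHeartbeats 1000000 in
/-- Let `K ⊆ D² × ℝ` be the (closed convex) epigraph of a continuous convex function `f` on
the open unit disk, and let `L` be a nonempty spacelike (non-vertical) line of `D² × ℝ`
contained in the boundary graph of `f`.  Then the set `S(L)` of `σ ∈ ℝ^{1,2}` whose dual
plane `P_σ = {(η,t) : ⟨(1,η),σ⟩ = t}` is a support plane of `K` containing `L` is either a
single point or a compact segment of spacelike direction. -/
theorem support_planes_of_bending_line (f : ℝ × ℝ → ℝ)
    (hconv : ConvexOn ℝ {η : ℝ × ℝ | η.1 ^ 2 + η.2 ^ 2 < 1} f)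
    (hcont : ContinuousOn f {η : ℝ × ℝ | η.1 ^ 2 + η.2 ^ 2 < 1})
    (p q : (ℝ × ℝ) × ℝ) (hnv : p.1 ≠ q.1)
    (L : Set ((ℝ × ℝ) × ℝ))
    (hL : L = {x | (∃ t : ℝ, x = p + t • (q - p)) ∧ x.1.1 ^ 2 + x.1.2 ^ 2 < 1})
    (hLne : L.Nonempty)
    (hLgraph : ∀ x ∈ L, f x.1 = x.2)
    (S : Set (ℝ × ℝ × ℝ))
    (hS : S = {σ | (∀ η : ℝ × ℝ, η.1 ^ 2 + η.2 ^ 2 < 1 → mink (1, η.1, η.2) σ ≤ f η) ∧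
        ∀ x ∈ L, mink (1, x.1.1, x.1.2) σ = x.2}) :
    (∃ σ, S = {σ}) ∨
      ∃ σ₁ σ₂ : ℝ × ℝ × ℝ, σ₁ ≠ σ₂ ∧ 0 < mink (σ₁ - σ₂) (σ₁ - σ₂) ∧
        S = segment ℝ σ₁ σ₂ := by
  -- notation
  set w1 : ℝ := q.1.1 - p.1.1 with hw1
  set w2 : ℝ := q.1.2 - p.1.2 with hw2
  set dd : ℝ := q.2 - p.2 with hdd
  set nw : ℝ := w1^2 + w2^2 with hnw
  have hwne : w1 ≠ 0 ∨ w2 ≠ 0 := by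
    by_contra hcon
    push_neg at hcon
    apply hnv
    have h1 : q.1.1 - p.1.1 = 0 := hcon.1
    have h2 : q.1.2 - p.1.2 = 0 := hcon.2
    exact Prod.ext (by linarith) (by linarith)
  have hnwpos : 0 < nw := by
    rcases hwne with h | h <;> · rw [hnw]; positivity
  -- coordinates of points on the line
  have hacoord : ∀ t : ℝ, p + t • (q - p) = ((p.1.1 + t*w1, p.1.2 + t*w2), p.2 + t*dd) := by
    intro t
    refine Prod.ext (Prod.ext ?_ ?_) ?_ <;>
      simp [hw1, hw2, hdd, Prod.fst_add, Prod.snd_add, Prod.fst_sub, Prod.snd_sub,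
        Prod.smul_fst, Prod.smul_snd, smul_eq_mul] <;> ring
  -- base point on the line
  rw [hL] at hLne
  simp only [Set.mem_setOf_eq, Set.Nonempty] at hLne
  obtain ⟨x₀, ⟨t₀, hx₀⟩, hx₀D⟩ := hLne
  rw [hacoord t₀] at hx₀
  subst hx₀
  simp only [] at hx₀D
  set A1 : ℝ := p.1.1 + t₀*w1 with hA1
  set A2 : ℝ := p.1.2 + t₀*w2 with hA2
  have hx₀D' : A1^2 + A2^2 < 1 := hx₀D
  -- f on the line
  have hfline : ∀ t : ℝ, (p.1.1 + t*w1)^2 + (p.1.2 + t*w2)^2 < 1 →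
      f (p.1.1 + t*w1, p.1.2 + t*w2) = p.2 + t*dd := by
    intro t ht
    have hmem : (p + t • (q - p)) ∈ L := by
      rw [hL]
      refine ⟨⟨t, rfl⟩, ?_⟩
      rw [hacoord t]
      exact ht
    have := hLgraph _ hmem
    rwa [hacoord t] at this
  -- ε₀-interval along the line stays in the disk
  obtain ⟨ε₀, hε₀pos, hε₀⟩ := disk_perturb A1 A2 w1 w2 hx₀D'
  have hlineD : ∀ s : ℝ, |s| ≤ ε₀ →
      (p.1.1 + (t₀+s)*w1)^2 + (p.1.2 + (t₀+s)*w2)^2 < 1 := by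
    intro s hs
    have := hε₀ s hs
    have e1 : p.1.1 + (t₀+s)*w1 = A1 + s*w1 := by rw [hA1]; ring
    have e2 : p.1.2 + (t₀+s)*w2 = A2 + s*w2 := by rw [hA2]; ring
    rw [e1, e2]; exact this
  -- characterization of S
  have hchar : ∀ σ : ℝ × ℝ × ℝ, σ ∈ S ↔
      ((∀ η : ℝ × ℝ, η.1 ^ 2 + η.2 ^ 2 < 1 → mink (1, η.1, η.2) σ ≤ f η) ∧
        -σ.1 + p.1.1*σ.2.1 + p.1.2*σ.2.2 = p.2 ∧ w1*σ.2.1 + w2*σ.2.2 = dd) := by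
    intro σ
    rw [hS, Set.mem_setOf_eq]
    constructor
    · rintro ⟨hineq, heqL⟩
      have hval : ∀ s : ℝ, |s| ≤ ε₀ →
          -σ.1 + (p.1.1+(t₀+s)*w1)*σ.2.1 + (p.1.2+(t₀+s)*w2)*σ.2.2 = p.2 + (t₀+s)*dd := by
        intro s hs
        have hmem : (p + (t₀+s) • (q - p)) ∈ L := by
          rw [hL]
          exact ⟨⟨_, rfl⟩, by rw [hacoord]; exact hlineD s hs⟩
        have h := heqL _ hmem
        rw [hacoord] at h
        simpa [mink] using h
      have hp := hval ε₀ (le_of_eq (abs_of_pos hε₀pos))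
      have hm := hval (-ε₀) (by rw [abs_neg, abs_of_pos hε₀pos])
      have h2ε : (2*ε₀) * (w1*σ.2.1 + w2*σ.2.2 - dd) = 0 := by linear_combination hp - hm
      have hM1 : w1*σ.2.1 + w2*σ.2.2 = dd := by
        have h := (mul_eq_zero.mp h2ε).resolve_left (by positivity)
        linarith
      exact ⟨hineq, by linear_combination hp - (t₀+ε₀)*hM1, hM1⟩
    · rintro ⟨hineq, hM0, hM1⟩
      refine ⟨hineq, ?_⟩
      intro x hx
      rw [hL] at hx
      obtain ⟨⟨t, rfl⟩, -⟩ := hx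
      rw [hacoord]
      simp only [mink]
      linear_combination hM0 + t*hM1
  -- the direction vector
  set v : ℝ × ℝ × ℝ := (p.1.1*w2 - p.1.2*w1, w2, -w1) with hv
  have hBsq : (A1*w2 - A2*w1)^2 < nw := by
    nlinarith [sq_nonneg (A1*w1 + A2*w2), sq_nonneg A1, sq_nonneg A2]
  have hvsp : 0 < mink v v := by
    have hB : p.1.1*w2 - p.1.2*w1 = A1*w2 - A2*w1 := by rw [hA1, hA2]; ring
    simp only [mink, hv, hB]
    nlinarith [hBsq]
  -- nonemptiness of S
  have hSne : ∃ σ₀, σ₀ ∈ S := by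
    have hDopen : IsOpen {η : ℝ×ℝ | η.1^2 + η.2^2 < 1} := by
      have h : {η : ℝ×ℝ | η.1^2 + η.2^2 < 1}
          = (fun η : ℝ×ℝ => η.1^2 + η.2^2) ⁻¹' (Set.Iio 1) := rfl
      rw [h]
      exact (((continuous_fst.pow 2).add (continuous_snd.pow 2))).isOpen_preimage _ isOpen_Iio
    set U : Set ((ℝ×ℝ)×ℝ) := {z | z.1 ∈ {η : ℝ×ℝ | η.1^2 + η.2^2 < 1} ∧ f z.1 < z.2} with hU
    have hUconv : Convex ℝ U := hconv.convex_strict_epigraph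
    have hUopen : IsOpen U := by
      rw [isOpen_iff_mem_nhds]
      intro z hz
      have hz1 : z.1 ∈ {η : ℝ×ℝ | η.1^2 + η.2^2 < 1} := hz.1
      have hcz : ContinuousAt f z.1 := hcont.continuousAt (hDopen.mem_nhds hz1)
      have h1 : ∀ᶠ y : (ℝ×ℝ)×ℝ in nhds z, y.1 ∈ {η : ℝ×ℝ | η.1^2 + η.2^2 < 1} :=
        continuous_fst.continuousAt.preimage_mem_nhds (hDopen.mem_nhds hz1)
      have hF : ContinuousAt (fun y : (ℝ×ℝ)×ℝ => y.2 - f y.1) z :=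
        ContinuousAt.sub continuous_snd.continuousAt (hcz.comp continuous_fst.continuousAt)
      have hpos : (0:ℝ) < z.2 - f z.1 := by have := hz.2; linarith
      have h2 : ∀ᶠ y : (ℝ×ℝ)×ℝ in nhds z, (fun y : (ℝ×ℝ)×ℝ => y.2 - f y.1) y ∈ Set.Ioi (0:ℝ) :=
        hF (Ioi_mem_nhds hpos)
      filter_upwards [h1, h2] with y hy1 hy2
      refine ⟨hy1, ?_⟩
      have : (0:ℝ) < y.2 - f y.1 := hy2
      linarith
    have hfA : f (A1, A2) = p.2 + t₀*dd := by
      have h := hfline t₀ (by rw [← hA1, ← hA2]; exact hx₀D')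
      rwa [← hA1, ← hA2] at h
    set z₀ : (ℝ×ℝ)×ℝ := ((A1, A2), p.2 + t₀*dd) with hz₀
    have hz₀notin : z₀ ∉ U := by
      intro hmem
      have h2 : f (A1, A2) < p.2 + t₀*dd := hmem.2
      rw [hfA] at h2
      exact lt_irrefl _ h2
    obtain ⟨φ, hφ⟩ := geometric_hahn_banach_open_point hUconv hUopen hz₀notin
    set β : ℝ := φ (((0:ℝ),(0:ℝ)), (1:ℝ)) with hβ
    set s1 : ℝ := φ (((1:ℝ),(0:ℝ)), (0:ℝ)) with hs1
    set s2 : ℝ := φ (((0:ℝ),(1:ℝ)), (0:ℝ)) with hs2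
    have hsplit : ∀ (η : ℝ×ℝ) (t : ℝ), φ (η, t) = η.1 * s1 + η.2 * s2 + t * β := by
      intro η t
      have hdecomp : ((η, t) : (ℝ×ℝ)×ℝ) = η.1 • (((1:ℝ),(0:ℝ)), (0:ℝ))
          + η.2 • (((0:ℝ),(1:ℝ)), (0:ℝ)) + t • (((0:ℝ),(0:ℝ)), (1:ℝ)) := by
        refine Prod.ext (Prod.ext ?_ ?_) ?_ <;>
          simp [Prod.fst_add, Prod.snd_add, Prod.smul_fst, Prod.smul_snd, smul_eq_mul]
      rw [hdecomp, map_add, map_add, map_smul, map_smul, map_smul, hβ, hs1, hs2]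
      simp [smul_eq_mul]
    have hφz₀ : φ z₀ = A1*s1 + A2*s2 + (p.2 + t₀*dd)*β := hsplit (A1,A2) (p.2 + t₀*dd)
    have hz₀mem : ∀ t : ℝ, p.2 + t₀*dd < t → ((A1,A2), t) ∈ U := by
      intro t ht
      refine ⟨hx₀D', ?_⟩
      show f (A1, A2) < t
      rw [hfA]
      exact ht
    have hβneg : β < 0 := by
      have h := hφ _ (hz₀mem (p.2 + t₀*dd + 1) (by linarith))
      rw [hsplit, hφz₀] at h
      nlinarith
    have hβne : β ≠ 0 := ne_of_lt hβneg
    have hβne' : -β ≠ 0 := by intro h; apply hβne; linarith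
    have hle : ∀ η : ℝ×ℝ, η.1^2 + η.2^2 < 1 → η.1*s1 + η.2*s2 + f η * β ≤ φ z₀ := by
      intro η hη
      by_contra hcon
      push_neg at hcon
      have hgpos : 0 < η.1*s1 + η.2*s2 + f η * β - φ z₀ := by linarith
      set g : ℝ := η.1*s1 + η.2*s2 + f η * β - φ z₀ with hg
      have hmemU : ((η, f η + g/(-β)) : (ℝ×ℝ)×ℝ) ∈ U := by
        refine ⟨hη, ?_⟩
        show f η < f η + g/(-β)
        have : 0 < g/(-β) := div_pos hgpos (by linarith)
        linarith
      have h := hφ _ hmemU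
      rw [hsplit] at h
      have hexp : (f η + g/(-β)) * β = f η * β - g := by
        field_simp
        ring
      rw [hexp] at h
      linarith
    obtain ⟨σ₀, hσ₀def⟩ : ∃ σ₀ : ℝ × ℝ × ℝ, σ₀ = (-(φ z₀)/β, -s1/β, -s2/β) := ⟨_, rfl⟩
    have hminkσ₀ : ∀ η : ℝ×ℝ, mink (1, η.1, η.2) σ₀ = (φ z₀ - (η.1*s1 + η.2*s2))/β := by
      intro η
      rw [hσ₀def]
      simp only [mink]
      rw [eq_div_iff hβne]
      field_simp
      ring
    have hineqσ₀ : ∀ η : ℝ×ℝ, η.1^2 + η.2^2 < 1 → mink (1, η.1, η.2) σ₀ ≤ f η := by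
      intro η hη
      rw [hminkσ₀, div_le_iff_of_neg hβneg]
      have := hle η hη
      linarith
    have hEq0 : mink (1, A1, A2) σ₀ = p.2 + t₀*dd := by
      have h := hminkσ₀ (A1, A2)
      rw [hφz₀] at h
      rw [h, div_eq_iff hβne]
      ring
    have hineqs : ∀ s : ℝ, |s| ≤ ε₀ →
        mink (1, A1 + s*w1, A2 + s*w2) σ₀ ≤ p.2 + (t₀+s)*dd := by
      intro s hs
      have hD := hε₀ s hs
      have hfv : f (A1 + s*w1, A2 + s*w2) = p.2 + (t₀+s)*dd := by
        have h := hfline (t₀+s) (hlineD s hs)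
        have e1 : p.1.1 + (t₀+s)*w1 = A1 + s*w1 := by rw [hA1]; ring
        have e2 : p.1.2 + (t₀+s)*w2 = A2 + s*w2 := by rw [hA2]; ring
        rwa [e1, e2] at h
      have h := hineqσ₀ (A1 + s*w1, A2 + s*w2) hD
      rwa [hfv] at h
    have hp := hineqs ε₀ (le_of_eq (abs_of_pos hε₀pos))
    have hm := hineqs (-ε₀) (by rw [abs_neg, abs_of_pos hε₀pos])
    simp only [mink] at hEq0 hp hm
    have hpe : -(1*σ₀.1) + (A1 + ε₀*w1)*σ₀.2.1 + (A2 + ε₀*w2)*σ₀.2.2 = p.2 + (t₀+ε₀)*dd :=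
      le_antisymm hp (by linarith)
    have hme : -(1*σ₀.1) + (A1 + (-ε₀)*w1)*σ₀.2.1 + (A2 + (-ε₀)*w2)*σ₀.2.2
        = p.2 + (t₀+(-ε₀))*dd :=
      le_antisymm hm (by linarith)
    have h2ε : (2*ε₀) * (w1*σ₀.2.1 + w2*σ₀.2.2 - dd) = 0 := by linear_combination hpe - hme
    have hM1 : w1*σ₀.2.1 + w2*σ₀.2.2 = dd := by
      have h := (mul_eq_zero.mp h2ε).resolve_left (by positivity)
      linarith
    have hM0 : -σ₀.1 + p.1.1*σ₀.2.1 + p.1.2*σ₀.2.2 = p.2 := by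
      rw [hA1, hA2] at hpe
      linear_combination hpe - (t₀+ε₀)*hM1
    exact ⟨σ₀, (hchar σ₀).mpr ⟨hineqσ₀, hM0, hM1⟩⟩
  obtain ⟨σ₀, hσ₀⟩ := hSne
  -- every element of S is on the line through σ₀ with direction v
  have honline : ∀ σ ∈ S, σ = σ₀ + ((w2*(σ.2.1-σ₀.2.1) - w1*(σ.2.2-σ₀.2.2))/nw) • v := by
    intro σ hσ
    obtain ⟨-, hM0, hM1⟩ := (hchar σ).mp hσ
    obtain ⟨-, hM0', hM1'⟩ := (hchar σ₀).mp hσ₀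
    have hE2 : w1*(σ.2.1-σ₀.2.1) + w2*(σ.2.2-σ₀.2.2) = 0 := by linarith
    have hE1 : -(σ.1-σ₀.1) + p.1.1*(σ.2.1-σ₀.2.1) + p.1.2*(σ.2.2-σ₀.2.2) = 0 := by linarith
    have hnwne : nw ≠ 0 := ne_of_gt hnwpos
    have h1 : (σ.1 - σ₀.1) * nw =
        (w2*(σ.2.1-σ₀.2.1) - w1*(σ.2.2-σ₀.2.2)) * (p.1.1*w2 - p.1.2*w1) := by
      rw [hnw]
      linear_combination (p.1.1*w1 + p.1.2*w2)*hE2 - (w1^2+w2^2)*hE1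
    have h2 : (σ.2.1-σ₀.2.1) * nw = (w2*(σ.2.1-σ₀.2.1) - w1*(σ.2.2-σ₀.2.2)) * w2 := by
      rw [hnw]
      linear_combination w1*hE2
    have h3 : (σ.2.2-σ₀.2.2) * nw = (w2*(σ.2.1-σ₀.2.1) - w1*(σ.2.2-σ₀.2.2)) * (-w1) := by
      rw [hnw]
      linear_combination w2*hE2
    refine Prod.ext ?_ (Prod.ext ?_ ?_) <;>
      simp only [hv, Prod.fst_add, Prod.snd_add, Prod.smul_fst, Prod.smul_snd, smul_eq_mul] <;>
      field_simp
    · linear_combination h1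
    · linear_combination h2
    · linear_combination h3
  -- linearity facts
  have hlin : ∀ (c : ℝ) (η : ℝ×ℝ), mink (1, η.1, η.2) (σ₀ + c • v)
      = mink (1, η.1, η.2) σ₀ + c * (-(p.1.1*w2 - p.1.2*w1) + η.1*w2 + η.2*(-w1)) := by
    intro c η
    simp only [mink, hv, Prod.fst_add, Prod.snd_add, Prod.smul_fst, Prod.smul_snd, smul_eq_mul]
    ring
  have hM0v : ∀ c : ℝ, -((σ₀ + c • v).1) + p.1.1*(σ₀ + c • v).2.1 + p.1.2*(σ₀ + c • v).2.2
      = -σ₀.1 + p.1.1*σ₀.2.1 + p.1.2*σ₀.2.2 := by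
    intro c
    simp only [hv, Prod.fst_add, Prod.snd_add, Prod.smul_fst, Prod.smul_snd, smul_eq_mul]
    ring
  have hM1v : ∀ c : ℝ, w1*(σ₀ + c • v).2.1 + w2*(σ₀ + c • v).2.2
      = w1*σ₀.2.1 + w2*σ₀.2.2 := by
    intro c
    simp only [hv, Prod.fst_add, Prod.snd_add, Prod.smul_fst, Prod.smul_snd, smul_eq_mul]
    ring
  obtain ⟨hi₀, hM0₀, hM1₀⟩ := (hchar σ₀).mp hσ₀
  -- the parameter set
  set I : Set ℝ := {c : ℝ | ∀ η : ℝ×ℝ, η.1^2 + η.2^2 < 1 →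
      mink (1, η.1, η.2) σ₀ + c * (-(p.1.1*w2 - p.1.2*w1) + η.1*w2 + η.2*(-w1)) ≤ f η}
    with hIdef
  have hImem : ∀ c : ℝ, c ∈ I ↔ ∀ η : ℝ×ℝ, η.1^2 + η.2^2 < 1 →
      mink (1, η.1, η.2) σ₀ + c * (-(p.1.1*w2 - p.1.2*w1) + η.1*w2 + η.2*(-w1)) ≤ f η := by
    intro c
    rw [hIdef]
    exact Iff.rfl
  have hSmem : ∀ c : ℝ, σ₀ + c • v ∈ S ↔ c ∈ I := by
    intro c
    rw [hchar, hImem]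
    constructor
    · rintro ⟨hi, -, -⟩
      intro η hη
      rw [← hlin]
      exact hi η hη
    · intro hi
      refine ⟨fun η hη => by rw [hlin]; exact hi η hη, ?_, ?_⟩
      · rw [hM0v]; exact hM0₀
      · rw [hM1v]; exact hM1₀
  have h0I : (0:ℝ) ∈ I := (hSmem 0).mp (by rw [zero_smul, add_zero]; exact hσ₀)
  have hIne : I.Nonempty := ⟨0, h0I⟩
  have hSimg : S = (fun c : ℝ => σ₀ + c • v) '' I := by
    ext σ
    constructor
    · intro hσS
      have heq := honline σ hσS
      refine ⟨(w2*(σ.2.1-σ₀.2.1) - w1*(σ.2.2-σ₀.2.2))/nw, ?_, heq.symm⟩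
      exact (hSmem _).mp (by rw [← heq]; exact hσS)
    · rintro ⟨c, hc, rfl⟩
      exact (hSmem c).mpr hc
  -- convexity of I
  have hIconv : Convex ℝ I := by
    intro c hc c' hc' a b ha hb hab
    rw [hImem] at hc hc'
    rw [hImem]
    intro η hη
    have h1 := mul_le_mul_of_nonneg_left (hc η hη) ha
    have h2 := mul_le_mul_of_nonneg_left (hc' η hη) hb
    have e : ∀ x : ℝ, a*x + b*x = x := fun x => by rw [← add_mul, hab, one_mul]
    have e1 := e (f η)
    have e2 := e (mink (1, η.1, η.2) σ₀)
    simp only [smul_eq_mul]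
    linarith [h1, h2, e1, e2]
  -- closedness of I
  have hIclosed : IsClosed I := by
    have hrw : I = ⋂ η ∈ {η : ℝ×ℝ | η.1^2 + η.2^2 < 1},
        {c : ℝ | mink (1, η.1, η.2) σ₀
          + c * (-(p.1.1*w2 - p.1.2*w1) + η.1*w2 + η.2*(-w1)) ≤ f η} := by
      ext c
      rw [hImem]
      simp only [Set.mem_iInter, Set.mem_setOf_eq]
    rw [hrw]
    refine isClosed_biInter fun η hη => isClosed_le ?_ continuous_const
    exact continuous_const.add (continuous_id.mul continuous_const)
  -- boundedness of I
  obtain ⟨δ, hδpos, hδ⟩ := disk_perturb A1 A2 w2 (-w1) hx₀D'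
  have hetaP : (A1 + δ*w2)^2 + (A2 + δ*(-w1))^2 < 1 := hδ δ (le_of_eq (abs_of_pos hδpos))
  have hetaM : (A1 + (-δ)*w2)^2 + (A2 + (-δ)*(-w1))^2 < 1 :=
    hδ (-δ) (by rw [abs_neg, abs_of_pos hδpos])
  have hδnw : 0 < δ * nw := mul_pos hδpos hnwpos
  have hGP : -(p.1.1*w2 - p.1.2*w1) + (A1 + δ*w2)*w2 + (A2 + δ*(-w1))*(-w1) = δ*nw := by
    rw [hA1, hA2, hnw]; ring
  have hGM : -(p.1.1*w2 - p.1.2*w1) + (A1 + (-δ)*w2)*w2 + (A2 + (-δ)*(-w1))*(-w1)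
      = -(δ*nw) := by
    rw [hA1, hA2, hnw]; ring
  have hbddA : BddAbove I := by
    refine ⟨(f (A1 + δ*w2, A2 + δ*(-w1)) - mink (1, A1 + δ*w2, A2 + δ*(-w1)) σ₀)/(δ*nw),
      fun c hc => ?_⟩
    rw [hImem] at hc
    have h := hc (A1 + δ*w2, A2 + δ*(-w1)) hetaP
    rw [le_div_iff₀ hδnw]
    rw [hGP] at h
    linarith
  have hbddB : BddBelow I := by
    refine ⟨(mink (1, A1 + (-δ)*w2, A2 + (-δ)*(-w1)) σ₀
        - f (A1 + (-δ)*w2, A2 + (-δ)*(-w1)))/(δ*nw), fun c hc => ?_⟩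
    rw [hImem] at hc
    have h := hc (A1 + (-δ)*w2, A2 + (-δ)*(-w1)) hetaM
    rw [div_le_iff₀ hδnw]
    rw [hGM] at h
    linarith
  -- endpoints
  obtain ⟨c₁, hc₁def⟩ : ∃ c : ℝ, sInf I = c := ⟨_, rfl⟩
  obtain ⟨c₂, hc₂def⟩ : ∃ c : ℝ, sSup I = c := ⟨_, rfl⟩
  have hc₁I : c₁ ∈ I := hc₁def ▸ hIclosed.csInf_mem hIne hbddB
  have hc₂I : c₂ ∈ I := hc₂def ▸ hIclosed.csSup_mem hIne hbddA
  have hc12 : c₁ ≤ c₂ := hc₁def ▸ hc₂def ▸ csInf_le_csSup hIne hbddB hbddA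
  have hIcc : I = Set.Icc c₁ c₂ := by
    apply Set.Subset.antisymm
    · exact fun c hc => ⟨hc₁def ▸ csInf_le hbddB hc, hc₂def ▸ le_csSup hbddA hc⟩
    · rw [← segment_eq_Icc hc12]
      exact hIconv.segment_subset hc₁I hc₂I
  by_cases hcc : c₁ = c₂
  · left
    refine ⟨σ₀ + c₁ • v, ?_⟩
    rw [hSimg, hIcc, ← hcc, Set.Icc_self, Set.image_singleton]
  · right
    refine ⟨σ₀ + c₁ • v, σ₀ + c₂ • v, ?_, ?_, ?_⟩
    · intro h
      apply hcc
      have e1 : (σ₀ + c₁ • v).2.1 = (σ₀ + c₂ • v).2.1 := by rw [h]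
      have e2 : (σ₀ + c₁ • v).2.2 = (σ₀ + c₂ • v).2.2 := by rw [h]
      simp only [hv, Prod.fst_add, Prod.snd_add, Prod.smul_fst, Prod.smul_snd,
        smul_eq_mul] at e1 e2
      rcases hwne with hw | hw
      · have hmul : c₁ * w1 = c₂ * w1 := by nlinarith [e2]
        exact mul_right_cancel₀ hw hmul
      · have hmul : c₁ * w2 = c₂ * w2 := by nlinarith [e1]
        exact mul_right_cancel₀ hw hmul
    · have hdiff : (σ₀ + c₁ • v) - (σ₀ + c₂ • v) = (c₁ - c₂) • v := by
        rw [add_sub_add_left_eq_sub, ← sub_smul]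
      rw [hdiff]
      have hmm : mink ((c₁ - c₂) • v) ((c₁ - c₂) • v)
          = (c₁ - c₂)^2 * mink v v := by
        simp only [mink, Prod.smul_fst, Prod.smul_snd, smul_eq_mul]
        ring
      rw [hmm]
      have hne : c₁ - c₂ ≠ 0 := sub_ne_zero_of_ne hcc
      exact mul_pos (by positivity) hvsp
    · rw [hSimg, hIcc, ← segment_eq_Icc hc12]
      ext σ
      constructor
      · rintro ⟨c, ⟨a, b, ha, hb, hab, rfl⟩, rfl⟩
        refine ⟨a, b, ha, hb, hab, ?_⟩
        show a • (σ₀ + c₁ • v) + b • (σ₀ + c₂ • v) = σ₀ + (a • c₁ + b • c₂) • v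
        match_scalars
        · linarith
        · simp only [smul_eq_mul]; ring
      · rintro ⟨a, b, ha, hb, hab, rfl⟩
        refine ⟨a*c₁ + b*c₂, ⟨a, b, ha, hb, hab, by rw [smul_eq_mul, smul_eq_mul]⟩, ?_⟩
        show σ₀ + (a*c₁ + b*c₂) • v = a • (σ₀ + c₁ • v) + b • (σ₀ + c₂ • v)
        match_scalars
        · linarith
        · ring
end

section
/- Let φ : S^1 → R be a continuous function with convex lower envelope φ^- and concave upper envelope φ^+ on the closed unit disk, each restricting to φ on S^1. Suppose φ^-(0,0) = 0 and φ^- ≥ 0 on the disk (i.e., the horizontal plane is a support plane at the origin). Let w = sup_{η ∈ D^2} (φ^+(η) - φ^-(η))/√(1-‖η‖²) be the width. Then for every z in S^1, φ(z) ≤ 2w. -/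
/-- Let `φ : S¹ → ℝ` be continuous, with convex lower envelope `φ⁻` and concave upper
envelope `φ⁺` on the closed unit disk, each restricting to `φ` on `S¹`.  Suppose
`φ⁻(0,0) = 0` and `φ⁻ ≥ 0` on the disk (the horizontal plane is a support plane at the
origin).  If `w` bounds the width, i.e. `(φ⁺(η) - φ⁻(η))/√(1-‖η‖²) ≤ w` for all `η` in
the open disk, then `φ(z) ≤ 2w` for every `z ∈ S¹`. -/
theorem support_function_le_twice_width (φ φm φp : ℝ × ℝ → ℝ)
    (hcont : ContinuousOn φ {z : ℝ × ℝ | z.1 ^ 2 + z.2 ^ 2 = 1})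
    (hφm_cvx : ConvexOn ℝ {η : ℝ × ℝ | η.1 ^ 2 + η.2 ^ 2 ≤ 1} φm)
    (hφp_ccv : ConcaveOn ℝ {η : ℝ × ℝ | η.1 ^ 2 + η.2 ^ 2 ≤ 1} φp)
    (hbdrym : ∀ z : ℝ × ℝ, z.1 ^ 2 + z.2 ^ 2 = 1 → φm z = φ z)
    (hbdryp : ∀ z : ℝ × ℝ, z.1 ^ 2 + z.2 ^ 2 = 1 → φp z = φ z)
    (h0 : φm (0, 0) = 0)
    (hpos : ∀ η : ℝ × ℝ, η.1 ^ 2 + η.2 ^ 2 ≤ 1 → 0 ≤ φm η)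
    (w : ℝ)
    (hw : ∀ η : ℝ × ℝ, η.1 ^ 2 + η.2 ^ 2 < 1 →
      (φp η - φm η) / Real.sqrt (1 - (η.1 ^ 2 + η.2 ^ 2)) ≤ w) :
    ∀ z : ℝ × ℝ, z.1 ^ 2 + z.2 ^ 2 = 1 → φ z ≤ 2 * w := by
  intro z hz
  -- the width bound at the origin gives φp(0,0) ≤ w
  have h1 : φp (0, 0) ≤ w := by
    have := hw (0, 0) (by norm_num)
    have h0' : φm 0 = 0 := h0
    simpa [h0', h0] using this
  -- -z is also on the boundary
  have hnz : (-z).1 ^ 2 + (-z).2 ^ 2 = 1 := by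
    simpa using hz
  -- concavity of φp at the midpoint (0,0) of z and -z
  have hmem : z ∈ {η : ℝ × ℝ | η.1 ^ 2 + η.2 ^ 2 ≤ 1} := le_of_eq hz
  have hmem' : (-z) ∈ {η : ℝ × ℝ | η.1 ^ 2 + η.2 ^ 2 ≤ 1} := le_of_eq hnz
  have hcc := hφp_ccv.2 hmem hmem' (by norm_num : (0:ℝ) ≤ 1/2)
    (by norm_num : (0:ℝ) ≤ 1/2) (by norm_num)
  have hmid : (1/2 : ℝ) • z + (1/2 : ℝ) • (-z) = ((0 : ℝ), (0 : ℝ)) := by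
    ext <;> simp
  rw [hmid, hbdryp z hz, hbdryp (-z) hnz] at hcc
  rw [smul_eq_mul, smul_eq_mul] at hcc
  -- φ(-z) = φm(-z) ≥ 0
  have hφnz : 0 ≤ φ (-z) := by
    rw [← hbdrym (-z) hnz]; exact hpos _ (le_of_eq hnz)
  linarith
end

section
/- Let φ : S^1 → R be a continuous function with 0 ≤ φ(z) ≤ 2w for all z ∈ S^1 (for some constant w ≥ 0), whose convex lower envelope φ^- satisfies φ^-(0,0) = 0. Let y = (tanh 1, 0) and let u = (u0, u1, u2) ∈ R^{1,2} satisfy: ⟨(1,η), u⟩_{1,2} ≤ φ^-(η) for all η in the closed disk, and ⟨(1,y), u⟩_{1,2} = φ^-(y) ≥ 0. Then |u0| ≤ 2 tanh(1)/(1 - tanh 1)·w, |u1| ≤ 2/(1 - tanh 1)·w, |u2| ≤ 2/(1 - tanh 1)·w, and hence √(-u0² + u1² + u2²) ≤ 2√2/(1 - tanh 1)·w whenever -u0² + u1² + u2² ≥ 0. -/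
lemma mink_one_left (a b : ℝ) (u : ℝ × ℝ × ℝ) :
    mink (1, a, b) u = -u.1 + a * u.2.1 + b * u.2.2 := by
  simp only [mink, one_mul]

lemma Real.tanh_one_pos : 0 < Real.tanh 1 := by
  rw [Real.tanh_eq_sinh_div_cosh]
  exact div_pos (Real.sinh_pos_iff.mpr one_pos) (Real.cosh_pos 1)

lemma abs_coefficients_le_of_support_values {t M u₀ u₁ u₂ : ℝ} (ht₀ : 0 < t) (ht₁ : t < 1)
    (hcentre : -u₀ ≤ 0) (he₁ : -u₀ + u₁ ≤ M) (he₂ : -u₀ + u₂ ≤ M) (he₂' : -u₀ - u₂ ≤ M)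
    (htouch : 0 ≤ -u₀ + t * u₁) :
    |u₀| ≤ t * M / (1 - t) ∧ |u₁| ≤ M / (1 - t) ∧ |u₂| ≤ M / (1 - t) := by
  have hu₁ : u₁ ≤ M / (1 - t) := by
    rw [le_div_iff₀ (sub_pos.mpr ht₁)]
    linarith
  have hu₀ : u₀ ≤ t * M / (1 - t) := by
    rw [mul_div_assoc]
    nlinarith
  have hu₁_nonneg : 0 ≤ u₁ := nonneg_of_mul_nonneg_right (by linarith) ht₀
  have hsplit : M / (1 - t) = M + t * M / (1 - t) := by
    field_simp [(sub_pos.mpr ht₁).ne']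
    ring
  exact ⟨abs_le.mpr ⟨by linarith, hu₀⟩, abs_le.mpr ⟨by linarith, hu₁⟩,
    abs_le.mpr ⟨by linarith, by linarith⟩⟩

lemma sqrt_neg_sq_add_sq_add_sq_le {a b c C : ℝ} (hb : |b| ≤ C) (hc : |c| ≤ C) :
    √(-a ^ 2 + b ^ 2 + c ^ 2) ≤ √2 * C := by
  have hb2 : b ^ 2 ≤ C ^ 2 := sq_le_sq' (abs_le.mp hb).1 (abs_le.mp hb).2
  have hc2 : c ^ 2 ≤ C ^ 2 := sq_le_sq' (abs_le.mp hc).1 (abs_le.mp hc).2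
  rw [Real.sqrt_le_left (mul_nonneg (Real.sqrt_nonneg 2) ((abs_nonneg b).trans hb)), mul_pow,
    Real.sq_sqrt zero_le_two]
  nlinarith [sq_nonneg a]

theorem support_plane_coefficient_bounds_general (φ φm : ℝ × ℝ → ℝ) (w : ℝ)
    (hφ : ∀ z : ℝ × ℝ, z.1 ^ 2 + z.2 ^ 2 = 1 → 0 ≤ φ z ∧ φ z ≤ 2 * w)
    (hbdry : ∀ z : ℝ × ℝ, z.1 ^ 2 + z.2 ^ 2 = 1 → φm z = φ z)
    (h0 : φm (0, 0) = 0)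
    (u : ℝ × ℝ × ℝ)
    (hsup : ∀ η : ℝ × ℝ, η.1 ^ 2 + η.2 ^ 2 ≤ 1 → mink (1, η.1, η.2) u ≤ φm η)
    (heq : mink (1, Real.tanh 1, 0) u = φm (Real.tanh 1, 0))
    (hpos : 0 ≤ φm (Real.tanh 1, 0)) :
    |u.1| ≤ 2 * Real.tanh 1 / (1 - Real.tanh 1) * w ∧
    |u.2.1| ≤ 2 / (1 - Real.tanh 1) * w ∧
    |u.2.2| ≤ 2 / (1 - Real.tanh 1) * w ∧
    (0 ≤ -u.1 ^ 2 + u.2.1 ^ 2 + u.2.2 ^ 2 →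
      Real.sqrt (-u.1 ^ 2 + u.2.1 ^ 2 + u.2.2 ^ 2) ≤
        2 * Real.sqrt 2 / (1 - Real.tanh 1) * w) := by
  have hcircle (a b : ℝ) (hab : a ^ 2 + b ^ 2 = 1) : -u.1 + a * u.2.1 + b * u.2.2 ≤ 2 * w := by
    rw [← mink_one_left]
    exact (hsup (a, b) hab.le).trans ((hbdry (a, b) hab).trans_le (hφ (a, b) hab).2)
  have hcentre : -u.1 ≤ 0 := by simpa [mink_one_left, h0] using hsup (0, 0) (by norm_num)
  have he₁ : -u.1 + u.2.1 ≤ 2 * w := by simpa using hcircle 1 0 (by norm_num)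
  have he₂ : -u.1 + u.2.2 ≤ 2 * w := by simpa using hcircle 0 1 (by norm_num)
  have he₂' : -u.1 - u.2.2 ≤ 2 * w := by simpa [sub_eq_add_neg] using hcircle 0 (-1) (by norm_num)
  have htouch : 0 ≤ -u.1 + Real.tanh 1 * u.2.1 := by
    simpa [mink_one_left, ← heq] using hpos
  obtain ⟨hu₀, hu₁, hu₂⟩ := abs_coefficients_le_of_support_values Real.tanh_one_pos
    (Real.tanh_lt_one 1) hcentre he₁ he₂ he₂' htouch
  replace hu₁ : |u.2.1| ≤ 2 / (1 - Real.tanh 1) * w := hu₁.trans_eq (by ring)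
  replace hu₂ : |u.2.2| ≤ 2 / (1 - Real.tanh 1) * w := hu₂.trans_eq (by ring)
  refine ⟨hu₀.trans_eq (by ring), hu₁, hu₂, fun _ => ?_⟩
  exact (sqrt_neg_sq_add_sq_add_sq_le hu₁ hu₂).trans_eq (by ring)

/-- Let `φ : S¹ → ℝ` be continuous with `0 ≤ φ ≤ 2w` on `S¹`, whose convex lower envelope
`φ⁻` (equal to `φ` on `S¹`) satisfies `φ⁻(0,0) = 0`.  Let `y = (tanh 1, 0)` and let
`u = (u₀,u₁,u₂) ∈ ℝ^{1,2}` satisfy `⟨(1,η), u⟩ ≤ φ⁻(η)` on the closed disk with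
`⟨(1,y), u⟩ = φ⁻(y) ≥ 0`.  Then `|u₀| ≤ 2 tanh(1)/(1-tanh 1) · w`,
`|u₁| ≤ 2/(1-tanh 1) · w`, `|u₂| ≤ 2/(1-tanh 1) · w`, and hence
`√(-u₀² + u₁² + u₂²) ≤ 2√2/(1-tanh 1) · w` whenever `-u₀² + u₁² + u₂² ≥ 0`. -/
theorem support_plane_coefficient_bounds (φ φm : ℝ × ℝ → ℝ) (w : ℝ) (hw : 0 ≤ w)
    (hcont : ContinuousOn φ {z : ℝ × ℝ | z.1 ^ 2 + z.2 ^ 2 = 1})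
    (hφ : ∀ z : ℝ × ℝ, z.1 ^ 2 + z.2 ^ 2 = 1 → 0 ≤ φ z ∧ φ z ≤ 2 * w)
    (hbdry : ∀ z : ℝ × ℝ, z.1 ^ 2 + z.2 ^ 2 = 1 → φm z = φ z)
    (h0 : φm (0, 0) = 0)
    (u : ℝ × ℝ × ℝ)
    (hsup : ∀ η : ℝ × ℝ, η.1 ^ 2 + η.2 ^ 2 ≤ 1 → mink (1, η.1, η.2) u ≤ φm η)
    (heq : mink (1, Real.tanh 1, 0) u = φm (Real.tanh 1, 0))
    (hpos : 0 ≤ φm (Real.tanh 1, 0)) :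
    |u.1| ≤ 2 * Real.tanh 1 / (1 - Real.tanh 1) * w ∧
    |u.2.1| ≤ 2 / (1 - Real.tanh 1) * w ∧
    |u.2.2| ≤ 2 / (1 - Real.tanh 1) * w ∧
    (0 ≤ -u.1 ^ 2 + u.2.1 ^ 2 + u.2.2 ^ 2 →
      Real.sqrt (-u.1 ^ 2 + u.2.1 ^ 2 + u.2.2 ^ 2) ≤
        2 * Real.sqrt 2 / (1 - Real.tanh 1) * w) :=
  support_plane_coefficient_bounds_general φ φm w hφ hbdry h0 u hsup heq hpos
end

section
/- Let φ : S^1 → R be the support function of a vector field X, let A ∈ SO_0(1,2) and σ ∈ R^{1,2}. Then the support function of the vector field A_*X + Λ(σ) is given by ψ(z) = -⟨A^{-1}(1,z), (1,0,0)⟩_{1,2} · φ(A^{-1}·z) + ⟨(1,z), σ⟩_{1,2}, where A^{-1}·z denotes the induced Möbius action of A^{-1} on S^1 (radial projection of A^{-1}(1,z)). -/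
/-- The Minkowski bilinear form of signature `(-,+,+)` on `ℝ³`. -/
def mink3 (x y : Fin 3 → ℝ) : ℝ := -(x 0 * y 0) + x 1 * y 1 + x 2 * y 2

/-!
`B(1,z)` is null because `A` is an isometry of the Minkowski form and `(1,z)` is null; being
future-directed, it is the multiple `w₀ • (1, B·z)` of the point `(1, B·z)` of the circle at
height one, with `w₀ = -⟨B(1,z), (1,0,0)⟩`. The 1-homogeneity of `Φ` then gives
`Φ(B(1,z)) = w₀ · φ(B·z)`.
-/

lemma mink3_circle_self_eq_zero {z : ℝ × ℝ} (hz : z.1 ^ 2 + z.2 ^ 2 = 1) :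
    mink3 ![1, z.1, z.2] ![1, z.1, z.2] = 0 := by
  simp only [mink3, Matrix.cons_val_zero, Matrix.cons_val_one, Matrix.cons_val_two,
    Matrix.head_cons, Matrix.tail_cons]
  linear_combination hz

lemma mink3_self_eq_zero_of_mulVec {A : Matrix (Fin 3) (Fin 3) ℝ}
    (hform : ∀ u v : Fin 3 → ℝ, mink3 (A.mulVec u) (A.mulVec v) = mink3 u v)
    {v w : Fin 3 → ℝ} (hw : A.mulVec w = v) (hv : mink3 v v = 0) : mink3 w w = 0 := by
  rw [← hform, hw, hv]

lemma neg_mink3_e0 (w : Fin 3 → ℝ) : -mink3 w ![1, 0, 0] = w 0 := by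
  simp [mink3]

section NullVector

variable {w : Fin 3 → ℝ} (hnull : mink3 w w = 0) (hw0 : 0 < w 0)
include hnull hw0

lemma radial_projection_mem_circle : (w 1 / w 0) ^ 2 + (w 2 / w 0) ^ 2 = 1 := by
  simp only [mink3] at hnull
  field_simp
  linear_combination hnull

omit hnull in
lemma eq_smul_radial_projection : w = w 0 • ![1, w 1 / w 0, w 2 / w 0] := by
  ext i
  fin_cases i <;> simp [mul_div_cancel₀, hw0.ne']

lemma apply_eq_mul_radial_projection {Φ : (Fin 3 → ℝ) → ℝ}
    (hΦ : ∀ c : ℝ, 0 < c → ∀ x : Fin 3 → ℝ, Φ (c • x) = c * Φ x)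
    {φ : ℝ × ℝ → ℝ} (hφ : ∀ z : ℝ × ℝ, z.1 ^ 2 + z.2 ^ 2 = 1 → φ z = Φ ![1, z.1, z.2]) :
    Φ w = w 0 * φ (w 1 / w 0, w 2 / w 0) := by
  rw [hφ _ (radial_projection_mem_circle hnull hw0), ← hΦ _ hw0,
    ← eq_smul_radial_projection hw0]

end NullVector

theorem support_function_equivariance_general
    (Φ : (Fin 3 → ℝ) → ℝ)
    (hΦ : ∀ c : ℝ, 0 < c → ∀ x : Fin 3 → ℝ, Φ (c • x) = c * Φ x)
    (φ : ℝ × ℝ → ℝ)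
    (hφ : ∀ z : ℝ × ℝ, z.1 ^ 2 + z.2 ^ 2 = 1 → φ z = Φ ![1, z.1, z.2])
    (A B : Matrix (Fin 3) (Fin 3) ℝ) (hAB : A * B = 1)
    (hform : ∀ u v : Fin 3 → ℝ, mink3 (A.mulVec u) (A.mulVec v) = mink3 u v)
    (hpos : ∀ z : ℝ × ℝ, z.1 ^ 2 + z.2 ^ 2 = 1 → 0 < B.mulVec ![1, z.1, z.2] 0)
    (σ : Fin 3 → ℝ)
    (ψ : ℝ × ℝ → ℝ)
    (hψ : ∀ z : ℝ × ℝ, z.1 ^ 2 + z.2 ^ 2 = 1 →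
      ψ z = Φ (B.mulVec ![1, z.1, z.2]) + mink3 ![1, z.1, z.2] σ) :
    ∀ z : ℝ × ℝ, z.1 ^ 2 + z.2 ^ 2 = 1 →
      ψ z = -(mink3 (B.mulVec ![1, z.1, z.2]) ![1, 0, 0]) *
          φ (B.mulVec ![1, z.1, z.2] 1 / B.mulVec ![1, z.1, z.2] 0,
             B.mulVec ![1, z.1, z.2] 2 / B.mulVec ![1, z.1, z.2] 0)
        + mink3 ![1, z.1, z.2] σ := by
  intro z hz
  have hAB_apply : A.mulVec (B.mulVec ![1, z.1, z.2]) = ![1, z.1, z.2] := by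
    rw [Matrix.mulVec_mulVec, hAB, Matrix.one_mulVec]
  have hnull := mink3_self_eq_zero_of_mulVec hform hAB_apply (mink3_circle_self_eq_zero hz)
  rw [hψ z hz, neg_mink3_e0, apply_eq_mul_radial_projection hnull (hpos z hz) hΦ hφ]

/-- Let `φ` be the support function of a vector field `X` on `S¹`, corresponding to the
1-homogeneous function `Φ` on the null cone (`φ(z) = Φ(1,z)`).  Let `A ∈ SO₀(1,2)` with
inverse `B`, and `σ ∈ ℝ^{1,2}`.  The support function of `A_*X + Λ(σ)`, namely
`ψ(z) = Φ(A⁻¹(1,z)) + ⟨(1,z), σ⟩`, is given by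
`ψ(z) = -⟨A⁻¹(1,z), (1,0,0)⟩ · φ(A⁻¹·z) + ⟨(1,z), σ⟩`, where `A⁻¹·z` is the radial
projection of `A⁻¹(1,z)`. -/
theorem support_function_equivariance
    (Φ : (Fin 3 → ℝ) → ℝ)
    (hΦ : ∀ c : ℝ, 0 < c → ∀ x : Fin 3 → ℝ, Φ (c • x) = c * Φ x)
    (φ : ℝ × ℝ → ℝ)
    (hφ : ∀ z : ℝ × ℝ, z.1 ^ 2 + z.2 ^ 2 = 1 → φ z = Φ ![1, z.1, z.2])
    (A B : Matrix (Fin 3) (Fin 3) ℝ) (hAB : A * B = 1) (hBA : B * A = 1)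
    (hform : ∀ u v : Fin 3 → ℝ, mink3 (A.mulVec u) (A.mulVec v) = mink3 u v)
    (hdet : A.det = 1) (hA00 : 0 < A 0 0)
    (hpos : ∀ z : ℝ × ℝ, z.1 ^ 2 + z.2 ^ 2 = 1 → 0 < B.mulVec ![1, z.1, z.2] 0)
    (σ : Fin 3 → ℝ)
    (ψ : ℝ × ℝ → ℝ)
    (hψ : ∀ z : ℝ × ℝ, z.1 ^ 2 + z.2 ^ 2 = 1 →
      ψ z = Φ (B.mulVec ![1, z.1, z.2]) + mink3 ![1, z.1, z.2] σ) :
    ∀ z : ℝ × ℝ, z.1 ^ 2 + z.2 ^ 2 = 1 →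
      ψ z = -(mink3 (B.mulVec ![1, z.1, z.2]) ![1, 0, 0]) *
          φ (B.mulVec ![1, z.1, z.2] 1 / B.mulVec ![1, z.1, z.2] 0,
             B.mulVec ![1, z.1, z.2] 2 / B.mulVec ![1, z.1, z.2] 0)
        + mink3 ![1, z.1, z.2] σ :=
  support_function_equivariance_general Φ hΦ φ hφ A B hAB hform hpos σ ψ hψ
end

section
/- Let φ : S^1 → R be lower semicontinuous and let φ^- be its convex lower envelope on the closed disk. Let η_n = (x_n, 0) be a sequence on the segment [(0,0),(1,0)) converging to (1,0), and suppose φ(1,0) = 0 and φ^-(η) ≥ ⟨(1,η), σ_n⟩_{1,2} for all η, with equality at η_n, where σ_n = a_n p + b_n(0,w_n) + c_n(0,v_n) in the orthonormal frame p = (1,0,0), w_n = η_n/r_n, v_n rotate of w_n, r_n = ‖η_n‖. If a_n → +∞, b_n/a_n → 1, c_n/a_n → 0 and (1-r_n) b_n → 0, then dΠ_{(1,η_n)}((1,η_n) ⊠ σ_n) → 0. -/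
open Filter Topology

open ContinuousLinearMap in
lemma fderiv_radialProj_apply (p : ℝ × ℝ × ℝ) (hp : p.1 ≠ 0) (w : ℝ × ℝ × ℝ) :
    fderiv ℝ radialProj p w
      = (w.2.1 / p.1 - p.2.1 * w.1 / p.1 ^ 2, w.2.2 / p.1 - p.2.2 * w.1 / p.1 ^ 2) := by
  have h1 : HasFDerivAt (fun q : ℝ × ℝ × ℝ => q.1) (fst ℝ ℝ (ℝ × ℝ)) p := hasFDerivAt_fst
  have h21 : HasFDerivAt (fun q : ℝ × ℝ × ℝ => q.2.1)
      ((fst ℝ ℝ ℝ).comp (snd ℝ ℝ (ℝ × ℝ))) p := hasFDerivAt_fst.comp p hasFDerivAt_snd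
  have h22 : HasFDerivAt (fun q : ℝ × ℝ × ℝ => q.2.2)
      ((snd ℝ ℝ ℝ).comp (snd ℝ ℝ (ℝ × ℝ))) p := hasFDerivAt_snd.comp p hasFDerivAt_snd
  have hinv : HasFDerivAt (fun q : ℝ × ℝ × ℝ => (q.1)⁻¹)
      ((smulRight (1 : ℝ →L[ℝ] ℝ) (-(p.1 ^ 2)⁻¹)).comp (fst ℝ ℝ (ℝ × ℝ))) p :=
    (hasFDerivAt_inv hp).comp p h1
  have hA : HasFDerivAt (fun q : ℝ × ℝ × ℝ => (q.2.1 * q.1⁻¹, q.2.2 * q.1⁻¹)) _ p :=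
    HasFDerivAt.prodMk (h21.mul hinv) (h22.mul hinv)
  have hfun : radialProj = (fun q : ℝ × ℝ × ℝ => (q.2.1 * q.1⁻¹, q.2.2 * q.1⁻¹)) := by
    funext q; simp [radialProj, div_eq_mul_inv]
  rw [hfun, hA.fderiv]
  simp only [ContinuousLinearMap.prod_apply, ContinuousLinearMap.add_apply,
    ContinuousLinearMap.coe_smul', Pi.smul_apply, ContinuousLinearMap.coe_comp',
    Function.comp_apply, ContinuousLinearMap.coe_fst', ContinuousLinearMap.coe_snd',
    ContinuousLinearMap.smulRight_apply, ContinuousLinearMap.one_apply, smul_eq_mul]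
  rw [Prod.mk.injEq]
  constructor <;> (field_simp; ring)

lemma circle_isCompact : IsCompact {z : ℝ × ℝ | z.1 ^ 2 + z.2 ^ 2 = 1} := by
  have hclosed : IsClosed {z : ℝ × ℝ | z.1 ^ 2 + z.2 ^ 2 = 1} := by
    have : {z : ℝ × ℝ | z.1 ^ 2 + z.2 ^ 2 = 1}
        = (fun z : ℝ × ℝ => z.1 ^ 2 + z.2 ^ 2) ⁻¹' {1} := rfl
    rw [this]
    exact isClosed_singleton.preimage (by fun_prop)
  refine (isCompact_closedBall (0 : ℝ × ℝ) 1).of_isClosed_subset hclosed ?_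
  intro z hz
  simp only [Set.mem_setOf_eq] at hz
  have h1 : |z.1| ≤ 1 := (sq_le_one_iff_abs_le_one z.1).1 (by nlinarith [sq_nonneg z.2])
  have h2 : |z.2| ≤ 1 := (sq_le_one_iff_abs_le_one z.2).1 (by nlinarith [sq_nonneg z.1])
  simp [Metric.mem_closedBall, dist_zero_right, Prod.norm_def, Real.norm_eq_abs]
  exact ⟨h1, h2⟩

lemma lsc_bddBelow {φ : ℝ × ℝ → ℝ}
    (hlsc : LowerSemicontinuousOn φ {z : ℝ × ℝ | z.1 ^ 2 + z.2 ^ 2 = 1}) :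
    ∃ M : ℝ, ∀ z ∈ {z : ℝ × ℝ | z.1 ^ 2 + z.2 ^ 2 = 1}, M ≤ φ z := by
  set S := {z : ℝ × ℝ | z.1 ^ 2 + z.2 ^ 2 = 1} with hS
  have key : ∀ z ∈ S, ∃ U : Set (ℝ × ℝ), IsOpen U ∧ z ∈ U ∧ ∀ w ∈ U ∩ S, φ z - 1 < φ w := by
    intro z hz
    have := hlsc z hz (φ z - 1) (by linarith)
    rcases mem_nhdsWithin.1 this with ⟨U, hUo, hzU, hU⟩
    exact ⟨U, hUo, hzU, fun w hw => hU hw⟩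
  choose U hUo hUz hUsub using key
  obtain ⟨t, hcover⟩ := circle_isCompact.elim_nhds_subcover' (fun z hz => U z hz)
    (fun z hz => (hUo z hz).mem_nhds (hUz z hz))
  have htne : t.Nonempty := by
    by_contra h
    rw [Finset.not_nonempty_iff_eq_empty] at h
    have h1 : ((1 : ℝ), (0 : ℝ)) ∈ S := by simp [hS]
    have := hcover h1
    simp [h] at this
  refine ⟨t.inf' htne (fun z => φ z.1 - 1), fun z hz => ?_⟩
  have := hcover hz
  simp only [Set.mem_iUnion] at this
  obtain ⟨w, hw, hzw⟩ := this
  have hlt := hUsub w.1 w.2 z ⟨hzw, hz⟩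
  have hle : t.inf' htne (fun z => φ z.1 - 1) ≤ φ w.1 - 1 := Finset.inf'_le _ hw
  linarith

/-- An explicit affine map `z ↦ l * (z.1 - 1) - e`. -/
noncomputable def affAux (l e : ℝ) : (ℝ × ℝ) →ᵃ[ℝ] ℝ where
  toFun := fun z => l * (z.1 - 1) - e
  linear := l • LinearMap.fst ℝ ℝ ℝ
  map_vadd' := by
    intro p v
    simp only [LinearMap.smul_apply, LinearMap.fst_apply, smul_eq_mul, vadd_eq_add,
      Prod.fst_add]
    ring

lemma affAux_apply (l e : ℝ) (z : ℝ × ℝ) : affAux l e z = l * (z.1 - 1) - e := rfl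

lemma env_bddAbove (φ : ℝ × ℝ → ℝ) {x : ℝ} (hx0 : 0 < x) (hx1 : x < 1) :
    BddAbove {y : ℝ | ∃ a : (ℝ × ℝ) →ᵃ[ℝ] ℝ,
      (∀ z : ℝ × ℝ, z.1 ^ 2 + z.2 ^ 2 = 1 → a z ≤ φ z) ∧ y = a (x, 0)} := by
  set s := Real.sqrt (1 - x ^ 2) with hs
  have hs2 : s ^ 2 = 1 - x ^ 2 := Real.sq_sqrt (by nlinarith)
  refine ⟨(φ (x, s) + φ (x, -s)) / 2, fun y hy => ?_⟩
  obtain ⟨A, hA, rfl⟩ := hy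
  have hmid : midpoint ℝ ((x, s) : ℝ × ℝ) ((x, -s) : ℝ × ℝ) = (x, 0) := by
    rw [midpoint_eq_smul_add]
    rw [invOf_eq_inv]
    ext <;> simp <;> ring
  have h1 : A (x, s) ≤ φ (x, s) := hA _ (by simp; nlinarith)
  have h2 : A (x, -s) ≤ φ (x, -s) := hA _ (by simp; nlinarith)
  have := A.map_midpoint ((x, s) : ℝ × ℝ) ((x, -s) : ℝ × ℝ)
  rw [hmid] at this
  rw [this, midpoint_eq_smul_add, invOf_eq_inv, smul_eq_mul]
  linarith

/-- Let `φ : S¹ → ℝ` be lower semicontinuous with `φ(1,0) = 0` and convex lower envelope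
`φ⁻`.  Let `ηₙ = (xₙ, 0) → (1,0)` along the segment `[(0,0),(1,0))`, and let
`σₙ = aₙ p + bₙ (0,wₙ) + cₙ (0,vₙ)` (frame `p = (1,0,0)`, `wₙ = ηₙ/rₙ = (1,0)`,
`vₙ = (0,1)` its rotate, `rₙ = ‖ηₙ‖ = xₙ`) define support planes of `epi⁺(φ⁻)`
touching at `ηₙ`.  If `aₙ → +∞`, `bₙ/aₙ → 1`, `cₙ/aₙ → 0` and `(1-rₙ)bₙ → 0`, then
`dΠ_{(1,ηₙ)}((1,ηₙ) ⊠ σₙ) → 0`. -/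
theorem support_plane_limit_zero
    (φ : ℝ × ℝ → ℝ)
    (hlsc : LowerSemicontinuousOn φ {z : ℝ × ℝ | z.1 ^ 2 + z.2 ^ 2 = 1})
    (hφ1 : φ (1, 0) = 0)
    (x a b c : ℕ → ℝ)
    (hx : ∀ n, 0 < x n ∧ x n < 1)
    (hx1 : Tendsto x atTop (𝓝 1))
    (hsup : ∀ n, ∀ η : ℝ × ℝ, η.1 ^ 2 + η.2 ^ 2 ≤ 1 →
      mink (1, η.1, η.2) (a n, b n, c n) ≤ lowerEnv φ η)
    (heq : ∀ n, mink (1, x n, 0) (a n, b n, c n) = lowerEnv φ (x n, 0))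
    (ha : Tendsto a atTop atTop)
    (hb : Tendsto (fun n => b n / a n) atTop (𝓝 1))
    (hc : Tendsto (fun n => c n / a n) atTop (𝓝 0))
    (hrb : Tendsto (fun n => (1 - x n) * b n) atTop (𝓝 0)) :
    Tendsto (fun n =>
        fderiv ℝ radialProj (1, x n, 0) (mcross (1, x n, 0) (a n, b n, c n)))
      atTop (𝓝 0) := by
  -- Eventually a n and b n are positive
  have hapos : ∀ᶠ n in atTop, 1 ≤ a n := ha.eventually_ge_atTop 1
  have hbapos : ∀ᶠ n in atTop, (1 : ℝ) / 2 < b n / a n :=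
    hb.eventually (eventually_gt_nhds (by norm_num))
  have hbpos : ∀ᶠ n in atTop, 0 < b n := by
    filter_upwards [hapos, hbapos] with n h1 h2
    have ha0 : 0 < a n := by linarith
    have : 0 < b n / a n := by linarith
    have := mul_pos this ha0
    rwa [div_mul_cancel₀ _ (ne_of_gt ha0)] at this
  -- The value lowerEnv φ (x n, 0) = -(a n) + x n * b n; call it e n
  set e : ℕ → ℝ := fun n => -(a n) + x n * b n with he
  clear_value e
  have henv : ∀ n, e n = lowerEnv φ (x n, 0) := by
    intro n
    rw [← heq n]
    simp only [he, mink]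
    ring
  -- Upper bound: e n ≤ 0 eventually
  have hEnv1 : lowerEnv φ (1, 0) ≤ 0 := by
    apply Real.sSup_le _ le_rfl
    rintro y ⟨A, hA, rfl⟩
    have := hA (1, 0) (by norm_num)
    rwa [hφ1] at this
  have hupper : ∀ᶠ n in atTop, e n ≤ 0 := by
    filter_upwards [hbpos] with n hbn
    have h1 := hsup n (1, 0) (by norm_num)
    simp only [mink] at h1
    have hxn := hx n
    have : e n ≤ -(a n) + b n := by
      simp only [he]
      have : x n * b n ≤ 1 * b n := by
        apply mul_le_mul_of_nonneg_right (le_of_lt hxn.2) (le_of_lt hbn)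
      linarith
    calc e n ≤ -(a n) + b n := this
      _ ≤ lowerEnv φ (1, 0) := by
          convert h1 using 1; ring
      _ ≤ 0 := hEnv1
  -- Lower bound: for every ε > 0, eventually e n > -ε
  have hlower : ∀ ε > 0, ∀ᶠ n in atTop, -ε < e n := by
    intro ε hε
    obtain ⟨M, hM⟩ := lsc_bddBelow hlsc
    -- lsc at (1,0): φ > -ε/2 near (1,0) on the circle
    have hmem : ((1 : ℝ), (0 : ℝ)) ∈ {z : ℝ × ℝ | z.1 ^ 2 + z.2 ^ 2 = 1} := by norm_num
    have hev := hlsc (1, 0) hmem (-(ε / 2)) (by show φ (1, 0) > -(ε / 2); rw [hφ1]; linarith)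
    rw [eventually_iff, Metric.mem_nhdsWithin_iff] at hev
    obtain ⟨δ, hδ, hball'⟩ := hev
    have hball : ∀ z : ℝ × ℝ, dist z ((1:ℝ), (0:ℝ)) < δ →
        z ∈ {z : ℝ × ℝ | z.1 ^ 2 + z.2 ^ 2 = 1} → -(ε / 2) < φ z := by
      intro z h1 h2
      exact hball' ⟨Metric.mem_ball.mpr h1, h2⟩
    -- choose slope
    set l : ℝ := max 0 ((-M - ε / 2) * 2 / δ ^ 2) with hl
    have hl0 : 0 ≤ l := le_max_left _ _
    -- the affine map affAux l (ε/2) minorizes φ on the circle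
    have hmin : ∀ z : ℝ × ℝ, z.1 ^ 2 + z.2 ^ 2 = 1 → affAux l (ε / 2) z ≤ φ z := by
      intro z hz
      have hz1 : z.1 ≤ 1 := by nlinarith [sq_nonneg z.2]
      by_cases hcase : 1 - z.1 < δ ^ 2 / 2
      · -- z is close to (1,0)
        have hdist : dist z ((1 : ℝ), (0 : ℝ)) < δ := by
          rw [Prod.dist_eq]
          have d1 : dist z.1 (1 : ℝ) < δ := by
            rw [Real.dist_eq, abs_sub_lt_iff]
            constructor
            · nlinarith
            · nlinarith
          have d2 : dist z.2 (0 : ℝ) < δ := by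
            rw [Real.dist_eq, sub_zero, abs_lt]
            constructor <;> nlinarith
          exact max_lt d1 d2
        have := hball z hdist hz
        rw [affAux_apply]
        have : -(ε / 2) < φ z := this
        nlinarith
      · -- z is far: use global lower bound M
        push_neg at hcase
        have hlb := hM z hz
        rw [affAux_apply]
        have h2 : l * (z.1 - 1) ≤ -(l * (δ ^ 2 / 2)) := by
          have : δ ^ 2 / 2 ≤ 1 - z.1 := hcase
          nlinarith
        have h3 : (-M - ε / 2) * 2 / δ ^ 2 ≤ l := le_max_right _ _
        have hδ2 : 0 < δ ^ 2 := by positivity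
        have h4 : -M - ε / 2 ≤ l * (δ ^ 2 / 2) := by
          rw [div_le_iff₀ hδ2] at h3
          nlinarith
        linarith
    -- thus e n = lowerEnv φ (x n,0) ≥ affAux l (ε/2) (x n, 0)
    have hge : ∀ n, l * (x n - 1) - ε / 2 ≤ e n := by
      intro n
      rw [henv n, lowerEnv]
      have hmem2 : l * (x n - 1) - ε / 2 ∈ {y : ℝ | ∃ A : (ℝ × ℝ) →ᵃ[ℝ] ℝ,
          (∀ z : ℝ × ℝ, z.1 ^ 2 + z.2 ^ 2 = 1 → A z ≤ φ z) ∧ y = A (x n, 0)} :=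
        ⟨affAux l (ε / 2), hmin, by rw [affAux_apply]⟩
      exact le_csSup (env_bddAbove φ (hx n).1 (hx n).2) hmem2
    -- and l * (x n - 1) - ε/2 → -ε/2 > -ε
    have htend : Tendsto (fun n => l * (x n - 1) - ε / 2) atTop (𝓝 (-(ε / 2))) := by
      have : Tendsto (fun n => x n - 1) atTop (𝓝 0) := by
        have := hx1.sub (tendsto_const_nhds (x := (1 : ℝ)))
        simpa using this
      have h2 := this.const_mul l
      have h3 := h2.sub (tendsto_const_nhds (x := ε / 2))
      simpa using h3
    have : ∀ᶠ n in atTop, -ε < l * (x n - 1) - ε / 2 :=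
      htend.eventually (eventually_gt_nhds (by linarith))
    filter_upwards [this] with n hn
    exact lt_of_lt_of_le hn (hge n)
  -- hence e → 0
  have hetend : Tendsto e atTop (𝓝 0) := by
    rw [Metric.tendsto_atTop]
    intro ε hε
    have h1 := hlower (ε / 2) (by linarith)
    rw [eventually_atTop] at h1 hupper
    obtain ⟨N1, hN1⟩ := h1
    obtain ⟨N2, hN2⟩ := hupper
    refine ⟨max N1 N2, fun n hn => ?_⟩
    have e1 := hN1 n (le_trans (le_max_left _ _) hn)
    have e2 := hN2 n (le_trans (le_max_right _ _) hn)
    rw [Real.dist_eq, sub_zero, abs_lt]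
    constructor <;> linarith
  -- auxiliary tendsto facts
  have haa : ∀ᶠ n in atTop, a n ≠ 0 ∧ b n ≠ 0 := by
    filter_upwards [hapos, hbpos] with n h1 h2
    exact ⟨by linarith, ne_of_gt h2⟩
  -- (1 - x n) * a n → 0
  have hra : Tendsto (fun n => (1 - x n) * a n) atTop (𝓝 0) := by
    have h1 : Tendsto (fun n => ((1 - x n) * b n) / (b n / a n)) atTop (𝓝 (0 / 1)) :=
      hrb.div hb one_ne_zero
    rw [zero_div] at h1
    apply h1.congr'
    filter_upwards [haa] with n ⟨ha0, hb0⟩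
    field_simp
  -- component 2: b n - x n * a n → 0
  have hcomp2 : Tendsto (fun n => b n - x n * a n) atTop (𝓝 0) := by
    have hsum := (hetend.add hrb).add hra
    rw [add_zero, add_zero] at hsum
    apply hsum.congr
    intro n
    simp only [he]; ring
  -- component 1: (1 - (x n)^2) * c n → 0
  have hcomp1 : Tendsto (fun n => (x n ^ 2 - 1) * c n) atTop (𝓝 0) := by
    have hq : Tendsto (fun n => (c n / a n) / (b n / a n)) atTop (𝓝 (0 / 1)) :=
      hc.div hb one_ne_zero
    rw [zero_div] at hq
    have h1x : Tendsto (fun n => 1 + x n) atTop (𝓝 (1 + 1)) :=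
      (tendsto_const_nhds (x := (1:ℝ))).add hx1
    have hm := ((hrb.mul hq).mul h1x).neg
    rw [mul_zero, zero_mul, neg_zero] at hm
    apply hm.congr'
    filter_upwards [haa] with n ⟨ha0, hb0⟩
    field_simp
    ring
  -- assemble
  have hkey : ∀ n, fderiv ℝ radialProj (1, x n, 0) (mcross (1, x n, 0) (a n, b n, c n))
      = ((x n ^ 2 - 1) * c n, b n - x n * a n) := by
    intro n
    rw [fderiv_radialProj_apply (1, x n, 0) (by norm_num) _]
    simp only [mcross]
    rw [Prod.mk.injEq]
    constructor <;> ring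
  have := hcomp1.prodMk_nhds hcomp2
  rw [show ((0:ℝ), (0:ℝ)) = (0 : ℝ × ℝ) from rfl] at this
  apply this.congr
  intro n
  rw [hkey n]
end
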